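/- arXiv:2212.06996 — 3 statements merged into one kernel-verified Lean document; each statement's English description precedes it below -/
import Mathlib

section
/- Assume π_Θ has finite moments of all orders and ψ : ℝ → ℝ is measurable with all moments of ψ(θ₁) finite. Define r(Y) = Σ_{T ∈ 𝒯_{≤D}} r̂_T H_T(Y) where r̂ = P_∞^{-1} d_∞. Then lim_{n→∞} E[r(Y)·ψ(θ₁)] = lim_{n→∞} E[r(Y)²] = ⟨d_∞, P_∞^{-1} d_∞⟩ = ⟨c_∞, M_∞^{-1} c_∞⟩, and in particular lim_{n→∞} E[(r(Y) − ψ(θ₁))²] = E[ψ(θ₁)²] − ⟨c_∞, M_∞^{-1} c_∞⟩. -/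
open MeasureTheory ProbabilityTheory Filter Set
open scoped Classical

noncomputable section

/-! ## Rooted multigraphs on the finite vertex budget `Fin (m+1)`, with root `0` -/

/-- A rooted multigraph on the vertex set `Fin (m+1)` (root `= 0`), recorded through its
edge multiplicity function on unordered pairs of vertices. -/
abbrev EdgeFun (m : ℕ) := Sym2 (Fin (m + 1)) → ℕ

/-- Total number of edges, counted with multiplicity. -/
def edgeCount {m : ℕ} (A : EdgeFun m) : ℕ := ∑ s, A s

/-- A vertex is *used* by `A` if it is the root or an endpoint of an edge of `A`;
isolated non-root vertices are regarded as absent from the graph. -/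
def Used {m : ℕ} (A : EdgeFun m) (v : Fin (m + 1)) : Prop :=
  v = 0 ∨ ∃ s, A s ≠ 0 ∧ v ∈ s

/-- Root-preserving isomorphism of rooted multigraphs. -/
def Iso {m : ℕ} (A B : EdgeFun m) : Prop :=
  ∃ σ : Equiv.Perm (Fin (m + 1)), σ 0 = 0 ∧ ∀ s, B (Sym2.map σ s) = A s

/-- The simple graph underlying a multigraph (indexed by `Sym2`), on any vertex type. -/
def graphOf {β : Type*} (α : Sym2 β → ℕ) : SimpleGraph β where
  Adj u v := u ≠ v ∧ α s(u, v) ≠ 0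
  symm := ⟨fun u v h => ⟨h.1.symm, by rw [Sym2.eq_swap]; exact h.2⟩⟩
  loopless := ⟨fun u h => h.1 rfl⟩

/-- `A` is a rooted tree: simple (multiplicities ≤ 1, no self-loops), all used vertices
connected to the root, and the number of edges is the number of used vertices minus 1. -/
def IsRootedTree {m : ℕ} (A : EdgeFun m) : Prop :=
  (∀ s, A s ≤ 1) ∧ (∀ s : Sym2 (Fin (m + 1)), s.IsDiag → A s = 0) ∧
  (∀ v, Used A v → (graphOf A).Reachable 0 v) ∧
  edgeCount A + 1 = (Finset.univ.filter fun v => Used A v).card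

/-- The set `emb(A)` of embeddings: labelings of the used vertices of `A` by distinct
indices in `[n]`, sending the root to the first index. -/
def embs {m : ℕ} (A : EdgeFun m) (n : ℕ) : Finset ({ v : Fin (m + 1) // Used A v } → Fin n) :=
  Finset.univ.filter fun φ => Function.Injective φ ∧
    ∀ v : { v : Fin (m + 1) // Used A v }, (v : Fin (m + 1)) = 0 → (φ v : ℕ) = 0

/-- The shadow `sh(φ; A)`: the image multigraph of a labeling `φ`, as a multigraph on
vertex set `Fin n`. -/
def shadow {m : ℕ} (A : EdgeFun m) {n : ℕ} (φ : { v : Fin (m + 1) // Used A v } → Fin n) :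
    Sym2 (Fin n) → ℕ :=
  fun s' => ∑ s : Sym2 { v : Fin (m + 1) // Used A v },
    if Sym2.map φ s = s' then A (Sym2.map Subtype.val s) else 0

/-! ## The observation model, indexed by unordered pairs -/

/-- Sample space: the signal together with the noise entries `(Z_ij)_{i ≤ j}`. -/
abbrev GOmega (n : ℕ) := (Fin n → ℝ) × (Sym2 (Fin n) → ℝ)

/-- Joint law: `θ_i` i.i.d. `prior`; noise entries independent centered Gaussians with
variance `vdiag` on the diagonal and `1` off the diagonal. -/
def gMeasure (prior : Measure ℝ) (vdiag : NNReal) (n : ℕ) : Measure (GOmega n) :=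
  (Measure.pi fun _ : Fin n => prior).prod
    (Measure.pi fun s : Sym2 (Fin n) => gaussianReal 0 (if s.IsDiag then vdiag else 1))

/-- The observation `Y = θθᵀ/√n + Z`, as a function of unordered pairs. -/
def gObs (n : ℕ) (ω : GOmega n) : Sym2 (Fin n) → ℝ :=
  fun s => Sym2.lift ⟨fun i j => ω.1 i * ω.1 j, fun _ _ => mul_comm _ _⟩ s / Real.sqrt n
    + ω.2 s

/-- First coordinate `θ₁` of the signal. -/
def firstCoord {n : ℕ} (x : Fin n → ℝ) : ℝ := if h : 0 < n then x ⟨0, h⟩ else 0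

/-! ## Hermite polynomials and the centered graph polynomials `H_A` -/

/-- The `k`-th orthonormal Hermite polynomial `h_k = He_k/√(k!)`. -/
def hermiteNorm (k : ℕ) (x : ℝ) : ℝ :=
  (Polynomial.aeval x) (Polynomial.hermite k) / Real.sqrt (Nat.factorial k)

/-- The multivariate Hermite polynomial `h_α(Y) = ∏_{i ≤ j} h_{α_ij}(Y_ij)`. -/
def hermiteProd {n : ℕ} (α : Sym2 (Fin n) → ℕ) (Y : Sym2 (Fin n) → ℝ) : ℝ :=
  ∏ s, hermiteNorm (α s) (Y s)

/-- The support of a multigraph `α` on `[n]`: vertices incident to at least one edge. -/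
def inSupp {n : ℕ} (α : Sym2 (Fin n) → ℕ) (v : Fin n) : Prop := ∃ s, α s ≠ 0 ∧ v ∈ s

/-- The connected component of `v` in `α` (as a sub-multigraph of `α`). -/
def componentAt {n : ℕ} (α : Sym2 (Fin n) → ℕ) (v : Fin n) : Sym2 (Fin n) → ℕ :=
  fun s => if ∃ w ∈ s, (graphOf α).Reachable v w then α s else 0

/-- Canonical representatives (minimal vertices) of the non-empty connected components
of `α`. -/
def componentReps {n : ℕ} (α : Sym2 (Fin n) → ℕ) : Finset (Fin n) :=
  Finset.univ.filter fun v => inSupp α v ∧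
    ∀ w, inSupp α w → (graphOf α).Reachable v w → v ≤ w

/-- `H_α(Y) = ∏_{γ ∈ C(α)} (h_γ(Y) − E h_γ(Y))`: each non-empty connected component of
`α` is centered by its expectation under the observation model. -/
def Hcentered (prior : Measure ℝ) (vd : NNReal) {n : ℕ} (α : Sym2 (Fin n) → ℕ)
    (Y : Sym2 (Fin n) → ℝ) : ℝ :=
  ∏ v ∈ componentReps α,
    (hermiteProd (componentAt α v) Y -
      ∫ ω, hermiteProd (componentAt α v) (gObs n ω) ∂(gMeasure prior vd n))

/-- `H_A(Y) = |emb(A)|^{-1/2} ∑_{φ ∈ emb(A)} H_{sh(φ;A)}(Y)`. -/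
def HGraph (prior : Measure ℝ) (vd : NNReal) {m : ℕ} (A : EdgeFun m) (n : ℕ)
    (Y : Sym2 (Fin n) → ℝ) : ℝ :=
  (Real.sqrt ((embs A n).card))⁻¹ * ∑ φ ∈ embs A n, Hcentered prior vd (shadow A φ) Y

/-- `c_{n,A} = E[H_A(Y) ψ(θ₁)]`. -/
def cCoeff (prior : Measure ℝ) (vd : NNReal) (ψ : ℝ → ℝ) {m : ℕ} (A : EdgeFun m)
    (n : ℕ) : ℝ :=
  ∫ ω, HGraph prior vd A n (gObs n ω) * ψ (firstCoord ω.1) ∂(gMeasure prior vd n)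

/-- `M_{n,AB} = E[H_A(Y) H_B(Y)]`. -/
def MCoeff (prior : Measure ℝ) (vd : NNReal) {m : ℕ} (A B : EdgeFun m) (n : ℕ) : ℝ :=
  ∫ ω, HGraph prior vd A n (gObs n ω) * HGraph prior vd B n (gObs n ω)
    ∂(gMeasure prior vd n)

/-! ## Non-reversing labelings and the tree-structured polynomials `F_T` -/

/-- The set `nr(T)` of non-reversing labelings of `T`, rooted at the first index:
`φ(∘) = 1`, and any two distinct vertices with equal labels are at distance `> 2`, or at
distance exactly `2` and equidistant from the root. -/
def nonReversing {m : ℕ} (A : EdgeFun m) (n : ℕ) :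
    Finset ({ v : Fin (m + 1) // Used A v } → Fin n) :=
  Finset.univ.filter fun φ =>
    (∀ v : { v : Fin (m + 1) // Used A v }, (v : Fin (m + 1)) = 0 → (φ v : ℕ) = 0) ∧
    ∀ u v : { v : Fin (m + 1) // Used A v }, u ≠ v → φ u = φ v →
      (2 < (graphOf A).dist u.1 v.1 ∨
        ((graphOf A).dist u.1 v.1 = 2 ∧ (graphOf A).dist u.1 0 = (graphOf A).dist v.1 0))

/-- The tree-structured polynomial
`F_T(Y) = |nr(T)|^{-1/2} ∑_{φ ∈ nr(T)} ∏_{(u,v) ∈ E(T)} Y_{φ(u)φ(v)}`. -/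
def treePoly {m : ℕ} (A : EdgeFun m) (n : ℕ) (Y : Sym2 (Fin n) → ℝ) : ℝ :=
  (Real.sqrt ((nonReversing A n).card))⁻¹ *
    ∑ φ ∈ nonReversing A n,
      ∏ s : Sym2 { v : Fin (m + 1) // Used A v },
        Y (Sym2.map φ s) ^ A (Sym2.map Subtype.val s)

/-! ## Auxiliary machinery for the proof -/

section AuxMachinery

variable {n : ℕ}

lemma one_le_prod_real {ι : Type*} (s : Finset ι) (f : ι → ℝ) (h : ∀ i ∈ s, 1 ≤ f i) :
    1 ≤ ∏ i ∈ s, f i := by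
  calc (1:ℝ) = ∏ _i ∈ s, (1:ℝ) := by simp
  _ ≤ ∏ i ∈ s, f i := Finset.prod_le_prod (fun i _ => zero_le_one) h

lemma single_le_prod_real {ι : Type*} (s : Finset ι) (f : ι → ℝ) (h : ∀ i ∈ s, 1 ≤ f i)
    {a : ι} (ha : a ∈ s) : f a ≤ ∏ i ∈ s, f i := by
  rw [← Finset.mul_prod_erase s f ha]
  refine le_mul_of_one_le_right (zero_le_one.trans (h a ha)) ?_
  exact one_le_prod_real _ _ fun i hi => h i (Finset.mem_of_mem_erase hi)

/-- Weight function controlling polynomial growth on the sample space. -/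
def wt (n : ℕ) (ω : GOmega n) : ℝ :=
  (∏ i, (1 + |ω.1 i|)) * ∏ s, (1 + |ω.2 s|)

lemma one_le_wt (ω : GOmega n) : 1 ≤ wt n ω := by
  have h1 : (1:ℝ) ≤ ∏ i, (1 + |ω.1 i|) :=
    one_le_prod_real _ _ fun i _ => le_add_of_nonneg_right (abs_nonneg _)
  have h2 : (1:ℝ) ≤ ∏ s, (1 + |ω.2 s|) :=
    one_le_prod_real _ _ fun s _ => le_add_of_nonneg_right (abs_nonneg _)
  calc (1:ℝ) ≤ ∏ i, (1 + |ω.1 i|) := h1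
  _ ≤ wt n ω := le_mul_of_one_le_right (zero_le_one.trans h1) h2

lemma wt_nonneg (ω : GOmega n) : 0 ≤ wt n ω := zero_le_one.trans (one_le_wt ω)

/-- Measurable functions of polynomially bounded growth. -/
def PolyBd (n : ℕ) (f : GOmega n → ℝ) : Prop :=
  Measurable f ∧ ∃ C : ℝ, ∃ k : ℕ, 0 ≤ C ∧ ∀ ω, |f ω| ≤ C * wt n ω ^ k

lemma polyBd_const (c : ℝ) : PolyBd n fun _ => c :=
  ⟨measurable_const, |c|, 0, abs_nonneg c, fun ω => by simp⟩

lemma wt_pow_mono {k l : ℕ} (h : k ≤ l) (ω : GOmega n) : wt n ω ^ k ≤ wt n ω ^ l :=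
  pow_le_pow_right₀ (one_le_wt ω) h

lemma PolyBd.add {f g : GOmega n → ℝ} (hf : PolyBd n f) (hg : PolyBd n g) :
    PolyBd n fun ω => f ω + g ω := by
  obtain ⟨hfm, Cf, kf, hCf, hbf⟩ := hf
  obtain ⟨hgm, Cg, kg, hCg, hbg⟩ := hg
  refine ⟨hfm.add hgm, Cf + Cg, max kf kg, by linarith, fun ω => ?_⟩
  have h1 : |f ω| ≤ Cf * wt n ω ^ max kf kg :=
    (hbf ω).trans (mul_le_mul_of_nonneg_left (wt_pow_mono (le_max_left _ _) ω) hCf)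
  have h2 : |g ω| ≤ Cg * wt n ω ^ max kf kg :=
    (hbg ω).trans (mul_le_mul_of_nonneg_left (wt_pow_mono (le_max_right _ _) ω) hCg)
  calc |f ω + g ω| ≤ |f ω| + |g ω| := abs_add_le _ _
  _ ≤ (Cf + Cg) * wt n ω ^ max kf kg := by linarith

lemma PolyBd.mul {f g : GOmega n → ℝ} (hf : PolyBd n f) (hg : PolyBd n g) :
    PolyBd n fun ω => f ω * g ω := by
  obtain ⟨hfm, Cf, kf, hCf, hbf⟩ := hf
  obtain ⟨hgm, Cg, kg, hCg, hbg⟩ := hg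
  refine ⟨hfm.mul hgm, Cf * Cg, kf + kg, mul_nonneg hCf hCg, fun ω => ?_⟩
  rw [abs_mul]
  calc |f ω| * |g ω| ≤ (Cf * wt n ω ^ kf) * (Cg * wt n ω ^ kg) :=
        mul_le_mul (hbf ω) (hbg ω) (abs_nonneg _)
          (mul_nonneg hCf (pow_nonneg (wt_nonneg ω) _))
  _ = Cf * Cg * wt n ω ^ (kf + kg) := by rw [pow_add]; ring

lemma PolyBd.neg {f : GOmega n → ℝ} (hf : PolyBd n f) : PolyBd n fun ω => -(f ω) := by
  obtain ⟨hfm, Cf, kf, hCf, hbf⟩ := hf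
  exact ⟨hfm.neg, Cf, kf, hCf, fun ω => by simpa using hbf ω⟩

lemma PolyBd.sub {f g : GOmega n → ℝ} (hf : PolyBd n f) (hg : PolyBd n g) :
    PolyBd n fun ω => f ω - g ω := by
  simpa [sub_eq_add_neg] using hf.add hg.neg

lemma polyBd_sum {ι : Type*} (s : Finset ι) (f : ι → GOmega n → ℝ)
    (h : ∀ i ∈ s, PolyBd n (f i)) : PolyBd n fun ω => ∑ i ∈ s, f i ω := by
  classical
  induction s using Finset.induction_on with
  | empty => simpa using polyBd_const (n := n) 0
  | @insert a s ha ih =>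
      simp only [Finset.sum_insert ha]
      exact (h a (s.mem_insert_self a)).add
        (ih fun i hi => h i (Finset.mem_insert_of_mem hi))

lemma polyBd_prod {ι : Type*} (s : Finset ι) (f : ι → GOmega n → ℝ)
    (h : ∀ i ∈ s, PolyBd n (f i)) : PolyBd n fun ω => ∏ i ∈ s, f i ω := by
  classical
  induction s using Finset.induction_on with
  | empty => simpa using polyBd_const (n := n) 1
  | @insert a s ha ih =>
      simp only [Finset.prod_insert ha]
      exact (h a (s.mem_insert_self a)).mul
        (ih fun i hi => h i (Finset.mem_insert_of_mem hi))

lemma PolyBd.pow {f : GOmega n → ℝ} (hf : PolyBd n f) : ∀ k : ℕ, PolyBd n fun ω => f ω ^ k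
  | 0 => by simpa using polyBd_const (n := n) 1
  | (k + 1) => by
      have := (hf.pow k).mul hf
      simpa [pow_succ] using this

lemma polyBd_coord1 (i : Fin n) : PolyBd n fun ω => ω.1 i := by
  refine ⟨(measurable_pi_apply i).comp measurable_fst, 1, 1, zero_le_one, fun ω => ?_⟩
  rw [one_mul, pow_one, wt]
  have h1 : |ω.1 i| ≤ 1 + |ω.1 i| := by linarith [abs_nonneg (ω.1 i)]
  have h2 : (1 + |ω.1 i|) ≤ ∏ j, (1 + |ω.1 j|) :=
    single_le_prod_real _ _ (fun j _ => le_add_of_nonneg_right (abs_nonneg _))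
      (Finset.mem_univ i)
  have h3 : (1:ℝ) ≤ ∏ s, (1 + |ω.2 s|) :=
    one_le_prod_real _ _ fun s _ => le_add_of_nonneg_right (abs_nonneg _)
  calc |ω.1 i| ≤ ∏ j, (1 + |ω.1 j|) := h1.trans h2
  _ ≤ _ := le_mul_of_one_le_right (le_trans (abs_nonneg _) (h1.trans h2)) h3

lemma polyBd_coord2 (s : Sym2 (Fin n)) : PolyBd n fun ω => ω.2 s := by
  refine ⟨(measurable_pi_apply s).comp measurable_snd, 1, 1, zero_le_one, fun ω => ?_⟩
  rw [one_mul, pow_one, wt]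
  have h1 : |ω.2 s| ≤ 1 + |ω.2 s| := by linarith [abs_nonneg (ω.2 s)]
  have h2 : (1 + |ω.2 s|) ≤ ∏ t, (1 + |ω.2 t|) :=
    single_le_prod_real _ _ (fun t _ => le_add_of_nonneg_right (abs_nonneg _))
      (Finset.mem_univ s)
  have h3 : (1:ℝ) ≤ ∏ j, (1 + |ω.1 j|) :=
    one_le_prod_real _ _ fun j _ => le_add_of_nonneg_right (abs_nonneg _)
  calc |ω.2 s| ≤ ∏ t, (1 + |ω.2 t|) := h1.trans h2
  _ ≤ _ := le_mul_of_one_le_left (le_trans (abs_nonneg _) (h1.trans h2)) h3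

lemma polyBd_gObs (s : Sym2 (Fin n)) : PolyBd n fun ω => gObs n ω s := by
  induction s using Sym2.ind with
  | _ i j =>
    have hrw : (fun ω : GOmega n => gObs n ω s(i, j)) =
        fun ω : GOmega n => ω.1 i * ω.1 j * (Real.sqrt n)⁻¹ + ω.2 s(i, j) := by
      funext ω
      simp [gObs, div_eq_mul_inv]
    rw [hrw]
    exact (((polyBd_coord1 i).mul (polyBd_coord1 j)).mul (polyBd_const _)).add
      (polyBd_coord2 _)

lemma PolyBd.aevalComp {f : GOmega n → ℝ} (hf : PolyBd n f) (q : Polynomial ℤ) :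
    PolyBd n fun ω => (Polynomial.aeval (f ω)) q := by
  induction q using Polynomial.induction_on' with
  | add p q hp hq =>
      simp only [map_add]
      exact hp.add hq
  | monomial m a =>
      have hrw : (fun ω => (Polynomial.aeval (f ω)) ((Polynomial.monomial m) a)) =
          fun ω => (a : ℝ) * f ω ^ m := by
        funext ω
        simp [Polynomial.aeval_monomial]
      rw [hrw]
      exact (polyBd_const _).mul (hf.pow m)

lemma PolyBd.hermiteNormComp {f : GOmega n → ℝ} (hf : PolyBd n f) (k : ℕ) :
    PolyBd n fun ω => hermiteNorm k (f ω) := by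
  have hrw : (fun ω => hermiteNorm k (f ω)) = fun ω =>
      (Polynomial.aeval (f ω)) (Polynomial.hermite k) * (Real.sqrt (Nat.factorial k))⁻¹ := by
    funext ω
    rw [hermiteNorm, div_eq_mul_inv]
  rw [hrw]
  exact (hf.aevalComp _).mul (polyBd_const _)

lemma polyBd_hermiteProd (α : Sym2 (Fin n) → ℕ) :
    PolyBd n fun ω => hermiteProd α (gObs n ω) := by
  simp only [hermiteProd]
  exact polyBd_prod _ _ fun s _ => (polyBd_gObs s).hermiteNormComp (α s)

lemma polyBd_Hcentered (prior : Measure ℝ) (vd : NNReal) (α : Sym2 (Fin n) → ℕ) :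
    PolyBd n fun ω => Hcentered prior vd α (gObs n ω) := by
  simp only [Hcentered]
  exact polyBd_prod _ _ fun v _ => (polyBd_hermiteProd _).sub (polyBd_const _)

lemma polyBd_HGraph (prior : Measure ℝ) (vd : NNReal) {m : ℕ} (A : EdgeFun m) :
    PolyBd n fun ω => HGraph prior vd A n (gObs n ω) := by
  simp only [HGraph]
  exact (polyBd_const _).mul (polyBd_sum _ _ fun φ _ => polyBd_Hcentered _ _ _)

end AuxMachinery

section MeasureAux

variable {n : ℕ}

lemma gMeasure_one_eq (prior : Measure ℝ) (n : ℕ) :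
    gMeasure prior 1 n = (Measure.pi fun _ : Fin n => prior).prod
      (Measure.pi fun _ : Sym2 (Fin n) => gaussianReal 0 1) := by
  simp [gMeasure]

lemma isProbability_gMeasure (prior : Measure ℝ) [IsProbabilityMeasure prior] (n : ℕ) :
    IsProbabilityMeasure (gMeasure prior 1 n) := by
  rw [gMeasure_one_eq]
  infer_instance

lemma integrable_pi_prod {ι : Type*} [Fintype ι] (μ : Measure ℝ) [SigmaFinite μ]
    (f : ι → ℝ → ℝ) (hf : ∀ i, Integrable (f i) μ) :
    Integrable (fun x : ι → ℝ => ∏ i, f i (x i)) (Measure.pi fun _ => μ) := by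
  letI : MeasureSpace ℝ := ⟨μ⟩
  haveI : SigmaFinite (volume : Measure ℝ) := ‹SigmaFinite μ›
  exact Integrable.fintype_prod (f := f) hf

lemma integral_pi_prod {ι : Type*} [Fintype ι] (μ : Measure ℝ) [SigmaFinite μ]
    (f : ι → ℝ → ℝ) :
    ∫ x : ι → ℝ, ∏ i, f i (x i) ∂(Measure.pi fun _ => μ) = ∏ i, ∫ t, f i t ∂μ := by
  letI : MeasureSpace ℝ := ⟨μ⟩
  haveI : SigmaFinite (volume : Measure ℝ) := ‹SigmaFinite μ›
  exact integral_fintype_prod_eq_prod f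

lemma gaussianPDF_toReal_le (x : ℝ) :
    (gaussianPDF 0 1 x).toReal ≤ Real.exp (-x ^ 2 / 2) := by
  rw [gaussianPDF, ENNReal.toReal_ofReal (gaussianPDFReal_nonneg _ _ _), gaussianPDFReal]
  have hπ : (3:ℝ) < Real.pi := Real.pi_gt_three
  have h1 : 1 ≤ Real.sqrt (2 * Real.pi * ((1:NNReal):ℝ)) := by
    rw [show ((1:NNReal):ℝ) = 1 by norm_num, mul_one, show (1:ℝ) = Real.sqrt 1 by simp]
    exact Real.sqrt_le_sqrt (by linarith)
  have h2 : (Real.sqrt (2 * Real.pi * ((1:NNReal):ℝ)))⁻¹ ≤ 1 := inv_le_one_of_one_le₀ h1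
  calc (Real.sqrt (2 * Real.pi * ((1:NNReal):ℝ)))⁻¹ * Real.exp (-(x - 0) ^ 2 / (2 * ((1:NNReal):ℝ)))
      ≤ 1 * Real.exp (-(x - 0) ^ 2 / (2 * ((1:NNReal):ℝ))) :=
        mul_le_mul_of_nonneg_right h2 (Real.exp_pos _).le
  _ = Real.exp (-x ^ 2 / 2) := by norm_num

lemma gaussian_abs_moment (j : ℕ) :
    Integrable (fun x : ℝ => |x| ^ j) (gaussianReal 0 1) := by
  rw [gaussianReal_of_var_ne_zero _ one_ne_zero,
    integrable_withDensity_iff (measurable_gaussianPDF _ _)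
      (ae_of_all _ fun x => ENNReal.ofReal_lt_top)]
  have hKpos : (0:ℝ) ≤ 1 + (j.factorial : ℝ) * 4 ^ j := by positivity
  refine Integrable.mono'
    ((integrable_exp_neg_mul_sq (show (0:ℝ) < 4⁻¹ by norm_num)).const_mul
      (1 + (j.factorial : ℝ) * 4 ^ j))
    (((measurable_id.abs.pow measurable_const).mul
      (measurable_gaussianPDF 0 1).ennreal_toReal).aestronglyMeasurable)
    (ae_of_all _ fun x => ?_)
  have h0 : 0 ≤ (gaussianPDF 0 1 x).toReal := ENNReal.toReal_nonneg
  rw [Real.norm_eq_abs, abs_of_nonneg (mul_nonneg (pow_nonneg (abs_nonneg x) j) h0)]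
  have hb1 : |x| ^ j * (gaussianPDF 0 1 x).toReal ≤ |x| ^ j * Real.exp (-x ^ 2 / 2) :=
    mul_le_mul_of_nonneg_left (gaussianPDF_toReal_le x) (pow_nonneg (abs_nonneg x) j)
  refine hb1.trans ?_
  have h2 : |x| ^ j ≤ 1 + (x ^ 2) ^ j := by
    rcases le_total (|x|) 1 with h | h
    · have h4 : |x| ^ j ≤ 1 := pow_le_one₀ (abs_nonneg x) h
      have h5 : (0:ℝ) ≤ (x ^ 2) ^ j := by positivity
      linarith
    · have h5 : |x| ^ j ≤ (|x| ^ 2) ^ j := by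
        rw [← pow_mul]
        exact pow_le_pow_right₀ h (by omega)
      rw [sq_abs] at h5
      linarith
  have h3 : (x ^ 2) ^ j ≤ (j.factorial : ℝ) * 4 ^ j * Real.exp (4⁻¹ * x ^ 2) := by
    have h6 := Real.pow_div_factorial_le_exp (4⁻¹ * x ^ 2) (by positivity) j
    rw [div_le_iff₀ (by positivity : (0:ℝ) < (j.factorial : ℝ))] at h6
    have h7 : (x ^ 2) ^ j = 4 ^ j * (4⁻¹ * x ^ 2) ^ j := by
      rw [mul_pow, ← mul_assoc, ← mul_pow]
      norm_num
    rw [h7]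
    calc 4 ^ j * (4⁻¹ * x ^ 2) ^ j
        ≤ 4 ^ j * (Real.exp (4⁻¹ * x ^ 2) * (j.factorial : ℝ)) :=
          mul_le_mul_of_nonneg_left h6 (by positivity)
    _ = (j.factorial : ℝ) * 4 ^ j * Real.exp (4⁻¹ * x ^ 2) := by ring
  have hexp : Real.exp (4⁻¹ * x ^ 2) * Real.exp (-x ^ 2 / 2) = Real.exp (-4⁻¹ * x ^ 2) := by
    rw [← Real.exp_add]
    congr 1
    ring
  have hmono : Real.exp (-x ^ 2 / 2) ≤ Real.exp (-4⁻¹ * x ^ 2) :=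
    Real.exp_le_exp.2 (by nlinarith [sq_nonneg x])
  calc |x| ^ j * Real.exp (-x ^ 2 / 2)
      ≤ (1 + (j.factorial : ℝ) * 4 ^ j * Real.exp (4⁻¹ * x ^ 2)) * Real.exp (-x ^ 2 / 2) :=
        mul_le_mul_of_nonneg_right (h2.trans (by linarith)) (Real.exp_pos _).le
  _ = Real.exp (-x ^ 2 / 2) + (j.factorial : ℝ) * 4 ^ j *
        (Real.exp (4⁻¹ * x ^ 2) * Real.exp (-x ^ 2 / 2)) := by ring
  _ = Real.exp (-x ^ 2 / 2) + (j.factorial : ℝ) * 4 ^ j * Real.exp (-4⁻¹ * x ^ 2) := by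
        rw [hexp]
  _ ≤ (1 + (j.factorial : ℝ) * 4 ^ j) * Real.exp (-4⁻¹ * x ^ 2) := by
        have h8 : (0:ℝ) ≤ (j.factorial : ℝ) * 4 ^ j := by positivity
        nlinarith [hmono]

lemma integrable_one_add_abs_pow {ν : Measure ℝ} [IsFiniteMeasure ν]
    (h : ∀ j : ℕ, Integrable (fun x : ℝ => |x| ^ j) ν) (k : ℕ) :
    Integrable (fun x : ℝ => (1 + |x|) ^ k) ν := by
  refine Integrable.mono' (((integrable_const (1:ℝ)).add (h k)).const_mul ((2:ℝ) ^ k))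
    ((measurable_const.add measurable_id.abs).pow measurable_const).aestronglyMeasurable
    (ae_of_all _ fun x => ?_)
  have h0 : (0:ℝ) ≤ 1 + |x| := by positivity
  rw [Real.norm_eq_abs, abs_of_nonneg (pow_nonneg h0 k)]
  have hxk : (0:ℝ) ≤ |x| ^ k := pow_nonneg (abs_nonneg x) k
  rcases le_total (|x|) 1 with h1 | h1
  · calc (1 + |x|) ^ k ≤ 2 ^ k := pow_le_pow_left₀ h0 (by linarith) k
    _ ≤ 2 ^ k * (1 + |x| ^ k) :=
        le_mul_of_one_le_right (by positivity) (by linarith)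
  · calc (1 + |x|) ^ k ≤ (2 * |x|) ^ k := pow_le_pow_left₀ h0 (by linarith) k
    _ = 2 ^ k * |x| ^ k := by rw [mul_pow]
    _ ≤ 2 ^ k * (1 + |x| ^ k) := by
        have : (0:ℝ) < 2 ^ k := by positivity
        nlinarith

lemma integrable_wt_pow (prior : Measure ℝ) [IsProbabilityMeasure prior]
    (hmom : ∀ k : ℕ, Integrable (fun θ : ℝ => θ ^ k) prior) (n k : ℕ) :
    Integrable (fun ω => wt n ω ^ k) (gMeasure prior 1 n) := by
  have hprior : ∀ j : ℕ, Integrable (fun x : ℝ => |x| ^ j) prior := fun j => by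
    simpa [abs_pow] using (hmom j).abs
  have h1 : Integrable (fun x : Fin n → ℝ => ∏ i, (1 + |x i|) ^ k)
      (Measure.pi fun _ => prior) :=
    integrable_pi_prod _ _ fun _ => integrable_one_add_abs_pow hprior k
  have h2 : Integrable (fun z : Sym2 (Fin n) → ℝ => ∏ s, (1 + |z s|) ^ k)
      (Measure.pi fun _ => gaussianReal 0 1) :=
    integrable_pi_prod _ _ fun _ => integrable_one_add_abs_pow gaussian_abs_moment k
  rw [gMeasure_one_eq]
  have hrw : (fun ω : GOmega n => wt n ω ^ k) = fun ω : GOmega n =>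
      (∏ i, (1 + |ω.1 i|) ^ k) * ∏ s, (1 + |ω.2 s|) ^ k := by
    funext ω
    rw [wt, mul_pow, ← Finset.prod_pow, ← Finset.prod_pow]
  rw [hrw]
  exact h1.mul_prod h2

lemma PolyBd.integrable {f : GOmega n → ℝ} (hf : PolyBd n f) (prior : Measure ℝ)
    [IsProbabilityMeasure prior]
    (hmom : ∀ k : ℕ, Integrable (fun θ : ℝ => θ ^ k) prior) :
    Integrable f (gMeasure prior 1 n) := by
  obtain ⟨hm, C, k, hC, hb⟩ := hf
  refine Integrable.mono' ((integrable_wt_pow prior hmom n k).const_mul C)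
    hm.aestronglyMeasurable (ae_of_all _ fun ω => ?_)
  rw [Real.norm_eq_abs]
  exact hb ω

lemma measurable_firstCoord : Measurable (firstCoord : (Fin n → ℝ) → ℝ) := by
  unfold firstCoord
  by_cases h : 0 < n
  · simpa [h] using measurable_pi_apply (⟨0, h⟩ : Fin n)
  · simpa [h] using measurable_const (a := (0:ℝ)) (m := MeasurableSpace.pi)

lemma integrable_psiSq (prior : Measure ℝ) [IsProbabilityMeasure prior] (ψ : ℝ → ℝ)
    (hψ : Measurable ψ) (hψ2 : Integrable (fun x => ψ x ^ 2) prior) (n : ℕ) :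
    Integrable (fun ω : GOmega n => ψ (firstCoord ω.1) ^ 2) (gMeasure prior 1 n) := by
  haveI := isProbability_gMeasure prior n
  by_cases hn : 0 < n
  · set i0 : Fin n := ⟨0, hn⟩ with hi0
    have hfc : ∀ x : Fin n → ℝ, firstCoord x = x i0 := fun x => dif_pos hn
    have hrw : (fun ω : GOmega n => ψ (firstCoord ω.1) ^ 2) = fun ω : GOmega n =>
        (∏ i, if i = i0 then ψ (ω.1 i) ^ 2 else 1) *
          (fun _ : Sym2 (Fin n) → ℝ => (1:ℝ)) ω.2 := by
      funext ω
      rw [Finset.prod_ite_eq']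
      simp [hfc]
    rw [gMeasure_one_eq, hrw]
    refine Integrable.mul_prod (f := fun x : Fin n → ℝ => ∏ i, if i = i0 then ψ (x i) ^ 2 else 1)
      (g := fun _ : Sym2 (Fin n) → ℝ => (1:ℝ))
      (integrable_pi_prod prior (fun i t => if i = i0 then ψ t ^ 2 else 1)
        fun i => ?_) (integrable_const 1)
    by_cases h : i = i0
    · simpa [h] using hψ2
    · simpa [h] using integrable_const (1:ℝ) (μ := prior)
  · have hrw : (fun ω : GOmega n => ψ (firstCoord ω.1) ^ 2) = fun _ => ψ 0 ^ 2 := by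
      funext ω
      rw [show firstCoord ω.1 = 0 from dif_neg hn]
    rw [hrw]
    exact integrable_const _

lemma integral_psiSq_eq (prior : Measure ℝ) [IsProbabilityMeasure prior] (ψ : ℝ → ℝ)
    (hψ : Measurable ψ) (hψ2 : Integrable (fun x => ψ x ^ 2) prior) {n : ℕ} (hn : 0 < n) :
    ∫ ω, ψ (firstCoord ω.1) ^ 2 ∂(gMeasure prior 1 n) = ∫ x, ψ x ^ 2 ∂prior := by
  set i0 : Fin n := ⟨0, hn⟩ with hi0
  have hfc : ∀ x : Fin n → ℝ, firstCoord x = x i0 := fun x => dif_pos hn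
  have hrw : (fun ω : GOmega n => ψ (firstCoord ω.1) ^ 2) = fun ω : GOmega n =>
      (∏ i, if i = i0 then ψ (ω.1 i) ^ 2 else 1) *
        (fun _ : Sym2 (Fin n) → ℝ => (1:ℝ)) ω.2 := by
    funext ω
    rw [Finset.prod_ite_eq']
    simp [hfc]
  rw [gMeasure_one_eq, hrw]
  refine Eq.trans (integral_prod_mul (f := fun x : Fin n → ℝ =>
    ∏ i, if i = i0 then ψ (x i) ^ 2 else 1) (g := fun _ : Sym2 (Fin n) → ℝ => (1:ℝ))) ?_
  have hg : (∫ _z : Sym2 (Fin n) → ℝ, (1:ℝ) ∂(Measure.pi fun _ => gaussianReal 0 1)) = 1 := by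
    simp
  have hfval : (∫ x : Fin n → ℝ, ∏ i, if i = i0 then ψ (x i) ^ 2 else 1
      ∂(Measure.pi fun _ : Fin n => prior)) = ∫ x, ψ x ^ 2 ∂prior := by
    have h4 := integral_pi_prod (ι := Fin n) prior
      (fun i t => if i = i0 then ψ t ^ 2 else 1)
    refine Eq.trans h4 ?_
    have h5 : ∀ i : Fin n, (∫ t, (if i = i0 then ψ t ^ 2 else 1) ∂prior) =
        if i = i0 then ∫ t, ψ t ^ 2 ∂prior else 1 := by
      intro i
      by_cases h : i = i0 <;> simp [h]
    rw [Finset.prod_congr rfl fun i _ => h5 i, Finset.prod_ite_eq']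
    simp
  rw [hfval, hg, mul_one]

end MeasureAux

section IdentityAux

variable {n : ℕ} (prior : Measure ℝ) [IsProbabilityMeasure prior]

lemma PolyBd.mul_psi {f : GOmega n → ℝ} (hf : PolyBd n f)
    (hmom : ∀ k : ℕ, Integrable (fun θ : ℝ => θ ^ k) prior)
    (ψ : ℝ → ℝ) (hψ : Measurable ψ) (hψ2 : Integrable (fun x => ψ x ^ 2) prior) :
    Integrable (fun ω => f ω * ψ (firstCoord ω.1)) (gMeasure prior 1 n) := by
  obtain ⟨hm, C, k, hC, hb⟩ := hf
  have hψsq := integrable_psiSq prior ψ hψ hψ2 n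
  refine Integrable.mono' (((integrable_wt_pow prior hmom n (k * 2)).add hψsq).const_mul C)
    (hm.mul (hψ.comp (measurable_firstCoord.comp measurable_fst))).aestronglyMeasurable
    (ae_of_all _ fun ω => ?_)
  rw [Real.norm_eq_abs, abs_mul]
  have h1 := hb ω
  have h2 : wt n ω ^ k * |ψ (firstCoord ω.1)| ≤ wt n ω ^ (k * 2) + ψ (firstCoord ω.1) ^ 2 := by
    rw [pow_mul, ← sq_abs (ψ (firstCoord ω.1))]
    nlinarith [sq_nonneg (wt n ω ^ k - |ψ (firstCoord ω.1)|),
      abs_nonneg (ψ (firstCoord ω.1)), pow_nonneg (wt_nonneg ω) k]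
  calc |f ω| * |ψ (firstCoord ω.1)|
      ≤ (C * wt n ω ^ k) * |ψ (firstCoord ω.1)| :=
        mul_le_mul_of_nonneg_right h1 (abs_nonneg _)
  _ = C * (wt n ω ^ k * |ψ (firstCoord ω.1)|) := by ring
  _ ≤ C * (wt n ω ^ (k * 2) + ψ (firstCoord ω.1) ^ 2) := mul_le_mul_of_nonneg_left h2 hC

lemma integral_sum_H_mul_psi
    (hmom : ∀ k : ℕ, Integrable (fun θ : ℝ => θ ^ k) prior)
    (ψ : ℝ → ℝ) (hψ : Measurable ψ) (hψ2 : Integrable (fun x => ψ x ^ 2) prior)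
    {ι : Type*} [Fintype ι] {m : ℕ} (a : ι → ℝ) (A : ι → EdgeFun m) (n : ℕ) :
    ∫ ω, (∑ i, a i * HGraph prior 1 (A i) n (gObs n ω)) * ψ (firstCoord ω.1)
        ∂(gMeasure prior 1 n)
      = ∑ i, a i * cCoeff prior 1 ψ (A i) n := by
  have hint : ∀ i : ι, Integrable
      (fun ω => a i * (HGraph prior 1 (A i) n (gObs n ω) * ψ (firstCoord ω.1)))
      (gMeasure prior 1 n) := fun i =>
    ((polyBd_HGraph prior 1 (A i)).mul_psi prior hmom ψ hψ hψ2).const_mul (a i)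
  have hrw : (fun ω : GOmega n =>
      (∑ i, a i * HGraph prior 1 (A i) n (gObs n ω)) * ψ (firstCoord ω.1)) =
      fun ω => ∑ i, a i * (HGraph prior 1 (A i) n (gObs n ω) * ψ (firstCoord ω.1)) := by
    funext ω
    rw [Finset.sum_mul]
    exact Finset.sum_congr rfl fun i _ => by ring
  rw [hrw, integral_finset_sum _ fun i _ => hint i]
  exact Finset.sum_congr rfl fun i _ => by rw [integral_const_mul]; rfl

lemma integral_sum_H_sq
    (hmom : ∀ k : ℕ, Integrable (fun θ : ℝ => θ ^ k) prior)
    {ι : Type*} [Fintype ι] {m : ℕ} (a : ι → ℝ) (A : ι → EdgeFun m) (n : ℕ) :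
    ∫ ω, (∑ i, a i * HGraph prior 1 (A i) n (gObs n ω)) ^ 2 ∂(gMeasure prior 1 n)
      = ∑ i, ∑ j, a i * a j * MCoeff prior 1 (A i) (A j) n := by
  have hint : ∀ i j : ι, Integrable
      (fun ω => a i * a j *
        (HGraph prior 1 (A i) n (gObs n ω) * HGraph prior 1 (A j) n (gObs n ω)))
      (gMeasure prior 1 n) := fun i j =>
    (((polyBd_HGraph prior 1 (A i)).mul (polyBd_HGraph prior 1 (A j))).integrable prior
      hmom).const_mul _
  have hrw : (fun ω : GOmega n => (∑ i, a i * HGraph prior 1 (A i) n (gObs n ω)) ^ 2) =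
      fun ω => ∑ i, ∑ j, a i * a j *
        (HGraph prior 1 (A i) n (gObs n ω) * HGraph prior 1 (A j) n (gObs n ω)) := by
    funext ω
    rw [sq, Finset.sum_mul_sum]
    exact Finset.sum_congr rfl fun i _ => Finset.sum_congr rfl fun j _ => by ring
  rw [hrw, integral_finset_sum _ fun i _ => integrable_finset_sum _ fun j _ => hint i j]
  refine Finset.sum_congr rfl fun i _ => ?_
  rw [integral_finset_sum _ fun j _ => hint i j]
  exact Finset.sum_congr rfl fun j _ => by rw [integral_const_mul]; rfl

lemma integral_sub_sq
    (hmom : ∀ k : ℕ, Integrable (fun θ : ℝ => θ ^ k) prior)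
    (ψ : ℝ → ℝ) (hψ : Measurable ψ) (hψ2 : Integrable (fun x => ψ x ^ 2) prior)
    {f : GOmega n → ℝ} (hf : PolyBd n f) :
    ∫ ω, (f ω - ψ (firstCoord ω.1)) ^ 2 ∂(gMeasure prior 1 n)
      = (∫ ω, f ω ^ 2 ∂(gMeasure prior 1 n))
        - 2 * (∫ ω, f ω * ψ (firstCoord ω.1) ∂(gMeasure prior 1 n))
        + ∫ ω, ψ (firstCoord ω.1) ^ 2 ∂(gMeasure prior 1 n) := by
  have h1 : Integrable (fun ω => f ω ^ 2) (gMeasure prior 1 n) :=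
    (hf.pow 2).integrable prior hmom
  have h2 : Integrable (fun ω => f ω * ψ (firstCoord ω.1)) (gMeasure prior 1 n) :=
    hf.mul_psi prior hmom ψ hψ hψ2
  have h3 := integrable_psiSq prior ψ hψ hψ2 n
  have hrw : (fun ω : GOmega n => (f ω - ψ (firstCoord ω.1)) ^ 2) =
      fun ω => f ω ^ 2 - 2 * (f ω * ψ (firstCoord ω.1)) + ψ (firstCoord ω.1) ^ 2 := by
    funext ω
    ring
  have hc2 : Integrable (fun ω : GOmega n => 2 * (f ω * ψ (firstCoord ω.1)))
      (gMeasure prior 1 n) := h2.const_mul 2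
  have hsub : Integrable
      (fun ω : GOmega n => f ω ^ 2 - 2 * (f ω * ψ (firstCoord ω.1)))
      (gMeasure prior 1 n) := h1.sub hc2
  rw [hrw, integral_add hsub h3, integral_sub h1 hc2, integral_const_mul]

end IdentityAux

section SubtypeAux

/-- Extension of a vector on a subtype by zero. -/
def ext0Fun {α : Type*} (p : α → Prop) [DecidablePred p] (z : {a // p a} → ℝ) : α → ℝ :=
  fun A => if h : p A then z ⟨A, h⟩ else 0

lemma ext0Fun_subtype {α : Type*} (p : α → Prop) [DecidablePred p] (z : {a // p a} → ℝ)
    (T : {a // p a}) : ext0Fun p z T.1 = z T := by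
  simp only [ext0Fun]
  rw [dif_pos T.2, Subtype.coe_eta]

lemma ext0Fun_neg {α : Type*} (p : α → Prop) [DecidablePred p] (z : {a // p a} → ℝ)
    {A : α} (h : ¬ p A) : ext0Fun p z A = 0 := dif_neg h

lemma sum_eq_sum_subtype {α : Type*} [Fintype α] (p : α → Prop) [DecidablePred p]
    (F : α → ℝ) (hF : ∀ a, ¬ p a → F a = 0) :
    ∑ a : α, F a = ∑ x : {a // p a}, F x.1 := by
  have h0 : ∑ x : {a // ¬ p a}, F x.1 = 0 := Finset.sum_eq_zero fun x _ => hF x.1 x.2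
  rw [← Fintype.sum_subtype_add_sum_subtype p F, h0, add_zero]

end SubtypeAux

/-- accuracy of the tree-coefficient estimator `r`.  Let `R` be a
transversal of `𝒢_{≤D}` up to root-preserving isomorphism, and let `c_∞, M_∞` be the
entrywise limits of `c_n, M_n` (which satisfy `e_∞ = 0` on non-trees, vanishing
tree/non-tree blocks `R_∞ = 0`, and `M_∞ ≻ 0`).  With `r̂ = P_∞⁻¹ d_∞` (tree block) and
`r(Y) = Σ_{T ∈ 𝒯_{≤D}} r̂_T H_T(Y)`, one has
`lim E[r(Y)ψ(θ₁)] = lim E[r(Y)²] = ⟨d_∞, P_∞⁻¹ d_∞⟩ = ⟨c_∞, M_∞⁻¹ c_∞⟩` and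
`lim E[(r(Y) − ψ(θ₁))²] = E[ψ(θ₁)²] − ⟨c_∞, M_∞⁻¹ c_∞⟩`. -/
theorem tree_estimator_accuracy (prior : Measure ℝ) [IsProbabilityMeasure prior]
    (hmom : ∀ k : ℕ, Integrable (fun θ : ℝ => θ ^ k) prior)
    (ψ : ℝ → ℝ) (hψ : Measurable ψ)
    (hψmom : ∀ k : ℕ, Integrable (fun θ : ℝ => ψ θ ^ k) prior)
    (D : ℕ) (R : Finset (EdgeFun (2 * D)))
    (hRedge : ∀ B ∈ R, edgeCount B ≤ D)
    (hRtrans : ∀ A : EdgeFun (2 * D), edgeCount A ≤ D → ∃! B, B ∈ R ∧ Iso A B)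
    (Minf : Matrix ↥R ↥R ℝ) (cinf : ↥R → ℝ)
    (hMlim : ∀ A B : ↥R,
      Tendsto (fun n : ℕ => MCoeff prior 1 A.1 B.1 n) atTop (nhds (Minf A B)))
    (hclim : ∀ A : ↥R,
      Tendsto (fun n : ℕ => cCoeff prior 1 ψ A.1 n) atTop (nhds (cinf A)))
    (heinf : ∀ A : ↥R, ¬ IsRootedTree A.1 → cinf A = 0)
    (hRinf : ∀ A B : ↥R, IsRootedTree A.1 → ¬ IsRootedTree B.1 →
      Minf A B = 0 ∧ Minf B A = 0)
    (hMpd : Minf.PosDef) :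
    let TIdx := { A : ↥R // IsRootedTree A.1 }
    let Pinf : Matrix TIdx TIdx ℝ := Matrix.of fun T T' => Minf T.1 T'.1
    let dinf : TIdx → ℝ := fun T => cinf T.1
    let rhat : TIdx → ℝ := Pinf⁻¹.mulVec dinf
    let rEst : (n : ℕ) → (Sym2 (Fin n) → ℝ) → ℝ := fun n Y =>
      ∑ T : TIdx, rhat T * HGraph prior 1 T.1.1 n Y
    Tendsto (fun n : ℕ => ∫ ω, rEst n (gObs n ω) * ψ (firstCoord ω.1)
        ∂(gMeasure prior 1 n)) atTop
      (nhds (dotProduct dinf (Pinf⁻¹.mulVec dinf))) ∧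
    Tendsto (fun n : ℕ => ∫ ω, rEst n (gObs n ω) ^ 2 ∂(gMeasure prior 1 n)) atTop
      (nhds (dotProduct dinf (Pinf⁻¹.mulVec dinf))) ∧
    dotProduct dinf (Pinf⁻¹.mulVec dinf) =
      dotProduct cinf (Minf⁻¹.mulVec cinf) ∧
    Tendsto (fun n : ℕ =>
        ∫ ω, (rEst n (gObs n ω) - ψ (firstCoord ω.1)) ^ 2 ∂(gMeasure prior 1 n)) atTop
      (nhds ((∫ x, ψ x ^ 2 ∂prior) -
        dotProduct cinf (Minf⁻¹.mulVec cinf))) := by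
  
  classical
  intro TIdx Pinf dinf rhat rEst
  have hψ2 : Integrable (fun x => ψ x ^ 2) prior := hψmom 2
  -- symmetry of `Minf`
  have hMsymm : ∀ A B : ↥R, Minf A B = Minf B A := by
    intro A B
    conv_lhs => rw [← hMpd.1]
    rw [Matrix.conjTranspose_apply]
    exact star_trivial _
  -- the tree predicate and extension by zero
  have hext_tree : ∀ (z : TIdx → ℝ) (T : TIdx),
      ext0Fun (fun A : ↥R => IsRootedTree A.1) z T.1 = z T := fun z T =>
    ext0Fun_subtype _ z T
  have hext_nontree : ∀ (z : TIdx → ℝ) (A : ↥R), ¬ IsRootedTree A.1 →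
      ext0Fun (fun A : ↥R => IsRootedTree A.1) z A = 0 := fun z A hA =>
    ext0Fun_neg _ z hA
  have hsum : ∀ (F : ↥R → ℝ), (∀ A : ↥R, ¬ IsRootedTree A.1 → F A = 0) →
      ∑ A : ↥R, F A = ∑ T : TIdx, F T.1 := fun F hF =>
    sum_eq_sum_subtype (fun A : ↥R => IsRootedTree A.1) F hF
  -- mulVec through the extension
  have hmv : ∀ (z : TIdx → ℝ) (A : ↥R),
      Minf.mulVec (ext0Fun (fun A : ↥R => IsRootedTree A.1) z) A
        = ∑ T : TIdx, Minf A T.1 * z T := by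
    intro z A
    show ∑ B : ↥R, Minf A B * ext0Fun (fun A : ↥R => IsRootedTree A.1) z B = _
    rw [hsum (fun B => Minf A B * ext0Fun (fun A : ↥R => IsRootedTree A.1) z B)
      (fun B hB => by simp only [hext_nontree z B hB, mul_zero])]
    exact Finset.sum_congr rfl fun T _ => by simp only [hext_tree]
  -- `Pinf` is positive definite
  have hPherm : Pinf.IsHermitian := by
    ext T T'
    rw [Matrix.conjTranspose_apply]
    show star (Minf T'.1 T.1) = Minf T.1 T'.1
    rw [star_trivial]
    exact hMsymm _ _
  have hPpd : Pinf.PosDef := by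
    refine Matrix.PosDef.of_dotProduct_mulVec_pos hPherm fun x hx => ?_
    have hx0 : ext0Fun (fun A : ↥R => IsRootedTree A.1) x ≠ 0 := by
      intro h0
      apply hx
      funext T
      have h1 := congrFun h0 T.1
      rw [hext_tree x T] at h1
      simpa using h1
    have hpos := hMpd.dotProduct_mulVec_pos (x := ext0Fun (fun A : ↥R => IsRootedTree A.1) x) hx0
    have hq : dotProduct (star (ext0Fun (fun A : ↥R => IsRootedTree A.1) x))
        (Minf.mulVec (ext0Fun (fun A : ↥R => IsRootedTree A.1) x))
        = dotProduct (star x) (Pinf.mulVec x) := by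
      have hstar1 : star (ext0Fun (fun A : ↥R => IsRootedTree A.1) x)
          = ext0Fun (fun A : ↥R => IsRootedTree A.1) x := rfl
      have hstar2 : star x = x := rfl
      rw [hstar1, hstar2]
      show ∑ A : ↥R, ext0Fun (fun A : ↥R => IsRootedTree A.1) x A *
          Minf.mulVec (ext0Fun (fun A : ↥R => IsRootedTree A.1) x) A
        = ∑ T : TIdx, x T * Pinf.mulVec x T
      rw [hsum _ (fun A hA => by simp only [hext_nontree x A hA, zero_mul])]
      refine Finset.sum_congr rfl fun T _ => ?_
      simp only [hext_tree, hmv]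
      rfl
    rw [← hq]
    exact hpos
  have hPdet : IsUnit Pinf.det := isUnit_iff_ne_zero.2 hPpd.det_pos.ne'
  have hMdet : IsUnit Minf.det := isUnit_iff_ne_zero.2 hMpd.det_pos.ne'
  have hPinv : Pinf.mulVec rhat = dinf := by
    show Pinf.mulVec (Pinf⁻¹.mulVec dinf) = dinf
    rw [Matrix.mulVec_mulVec, Matrix.mul_nonsing_inv _ hPdet, Matrix.one_mulVec]
  -- block solve
  have hMx : Minf.mulVec (ext0Fun (fun A : ↥R => IsRootedTree A.1) rhat) = cinf := by
    funext A
    rw [hmv]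
    by_cases hA : IsRootedTree A.1
    · have h1 : ∑ T' : TIdx, Minf A T'.1 * rhat T' = Pinf.mulVec rhat ⟨A, hA⟩ := rfl
      rw [h1, hPinv]
    · rw [Finset.sum_eq_zero fun T' _ => by
        simp only [(hRinf T'.1 A T'.2 hA).2, zero_mul]]
      exact (heinf A hA).symm
  have hMinvc : Minf⁻¹.mulVec cinf = ext0Fun (fun A : ↥R => IsRootedTree A.1) rhat := by
    rw [← hMx, Matrix.mulVec_mulVec, Matrix.nonsing_inv_mul _ hMdet, Matrix.one_mulVec]
  have hS3 : dotProduct dinf (Pinf⁻¹.mulVec dinf) =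
      dotProduct cinf (Minf⁻¹.mulVec cinf) := by
    rw [hMinvc]
    show (∑ T : TIdx, dinf T * rhat T) =
      ∑ A : ↥R, cinf A * ext0Fun (fun A : ↥R => IsRootedTree A.1) rhat A
    rw [hsum _ (fun A hA => by simp only [hext_nontree _ _ hA, mul_zero])]
    exact Finset.sum_congr rfl fun T _ => by simp only [hext_tree]; rfl
  -- the common limit value
  have hvdot : (∑ T : TIdx, rhat T * dinf T) = dotProduct dinf (Pinf⁻¹.mulVec dinf) := by
    show _ = ∑ T : TIdx, dinf T * rhat T
    exact Finset.sum_congr rfl fun T _ => mul_comm _ _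
  have htend1 : Tendsto (fun n : ℕ => ∑ T : TIdx, rhat T * cCoeff prior 1 ψ T.1.1 n)
      atTop (nhds (∑ T : TIdx, rhat T * dinf T)) :=
    tendsto_finset_sum _ fun T _ => ((hclim T.1).const_mul (rhat T))
  have htend2 : Tendsto (fun n : ℕ =>
      ∑ i : TIdx, ∑ j : TIdx, rhat i * rhat j * MCoeff prior 1 i.1.1 j.1.1 n)
      atTop (nhds (∑ T : TIdx, rhat T * dinf T)) := by
    have h1 : Tendsto (fun n : ℕ =>
        ∑ i : TIdx, ∑ j : TIdx, rhat i * rhat j * MCoeff prior 1 i.1.1 j.1.1 n)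
        atTop (nhds (∑ i : TIdx, ∑ j : TIdx, rhat i * rhat j * Minf i.1 j.1)) :=
      tendsto_finset_sum _ fun i _ => tendsto_finset_sum _ fun j _ =>
        ((hMlim i.1 j.1).const_mul _)
    have h2 : (∑ i : TIdx, ∑ j : TIdx, rhat i * rhat j * Minf i.1 j.1)
        = ∑ T : TIdx, rhat T * dinf T := by
      refine Finset.sum_congr rfl fun i _ => ?_
      have h3 : ∑ j : TIdx, rhat i * rhat j * Minf i.1 j.1
          = rhat i * Pinf.mulVec rhat i := by
        have h4 : Pinf.mulVec rhat i = ∑ j : TIdx, Minf i.1 j.1 * rhat j := rfl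
        rw [h4, Finset.mul_sum]
        exact Finset.sum_congr rfl fun j _ => by ring
      rw [h3, hPinv]
    rwa [h2] at h1
  have htendJ : Tendsto (fun n : ℕ =>
      ∫ ω, ψ (firstCoord ω.1) ^ 2 ∂(gMeasure prior 1 n)) atTop
      (nhds (∫ x, ψ x ^ 2 ∂prior)) := by
    refine Tendsto.congr' ?_ tendsto_const_nhds
    filter_upwards [eventually_ge_atTop 1] with n hn
    exact (integral_psiSq_eq prior ψ hψ hψ2 (by omega)).symm
  refine ⟨?_, ?_, hS3, ?_⟩
  · rw [← hvdot]
    exact htend1.congr fun n =>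
      (integral_sum_H_mul_psi prior hmom ψ hψ hψ2 rhat (fun T : TIdx => T.1.1) n).symm
  · rw [← hvdot]
    exact htend2.congr fun n =>
      (integral_sum_H_sq prior hmom rhat (fun T : TIdx => T.1.1) n).symm
  · have hfin : Tendsto (fun n : ℕ =>
        (∫ ω, (∑ T : TIdx, rhat T * HGraph prior 1 T.1.1 n (gObs n ω)) ^ 2
            ∂(gMeasure prior 1 n))
        - 2 * (∫ ω, (∑ T : TIdx, rhat T * HGraph prior 1 T.1.1 n (gObs n ω)) *
            ψ (firstCoord ω.1) ∂(gMeasure prior 1 n))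
        + ∫ ω, ψ (firstCoord ω.1) ^ 2 ∂(gMeasure prior 1 n)) atTop
        (nhds ((∑ T : TIdx, rhat T * dinf T) - 2 * (∑ T : TIdx, rhat T * dinf T)
          + ∫ x, ψ x ^ 2 ∂prior)) := by
      refine Tendsto.add (Tendsto.sub ?_ (Tendsto.const_mul 2 ?_)) htendJ
      · exact htend2.congr fun n =>
          (integral_sum_H_sq prior hmom rhat (fun T : TIdx => T.1.1) n).symm
      · exact htend1.congr fun n =>
          (integral_sum_H_mul_psi prior hmom ψ hψ hψ2 rhat (fun T : TIdx => T.1.1) n).symm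
    have hpt : (∑ T : TIdx, rhat T * dinf T) - 2 * (∑ T : TIdx, rhat T * dinf T)
        + (∫ x, ψ x ^ 2 ∂prior)
        = (∫ x, ψ x ^ 2 ∂prior) - dotProduct cinf (Minf⁻¹.mulVec cinf) := by
      rw [← hS3, ← hvdot]
      ring
    rw [hpt] at hfin
    refine hfin.congr fun n => ?_
    exact (integral_sub_sq prior hmom ψ hψ hψ2
      (polyBd_sum Finset.univ
        (fun (T : TIdx) ω => rhat T * HGraph prior 1 T.1.1 n (gObs n ω))
        fun T _ => (polyBd_const (rhat T)).mul (polyBd_HGraph prior 1 T.1.1))).symm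
end
end

section
/- Let π_Θ be a probability distribution on ℝ with finite second moment and define the posterior-mean denoiser f^Bayes(x; π_Θ, q) := E[Θ | qΘ + √q·G = x], where (Θ, G) ∼ π_Θ ⊗ N(0,1). Then for any q > 0 there exists a constant C = C(q, π_Θ) such that |f^Bayes(x; π_Θ, q)| ≤ C(1 + |x|) for all x ∈ ℝ. -/
open MeasureTheory ProbabilityTheory Real

/-- The posterior-mean denoiser `f^Bayes(x; π, q) = E[Θ | qΘ + √q·G = x]` for
`(Θ, G) ∼ π ⊗ N(0,1)`.  Under this observation model, the conditional law of the
observation given `Θ = θ` is `N(qθ, q)`, so by Bayes' rule the posterior mean is the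
explicit ratio of integrals below. -/
noncomputable def bayesDenoiser (prior : Measure ℝ) (q x : ℝ) : ℝ :=
  (∫ θ, θ * Real.exp (-(x - q * θ) ^ 2 / (2 * q)) ∂prior) /
    (∫ θ, Real.exp (-(x - q * θ) ^ 2 / (2 * q)) ∂prior)

/-- If `π` is a probability distribution on `ℝ` with finite second
moment, then for every `q > 0` there is a constant `C = C(q, π)` such that the
posterior-mean denoiser satisfies `|f^Bayes(x; π, q)| ≤ C (1 + |x|)` for all `x`. -/
theorem bayesDenoiser_linear_growth (prior : Measure ℝ) [IsProbabilityMeasure prior]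
    (hmom : Integrable (fun θ => θ ^ 2) prior) (q : ℝ) (hq : 0 < q) :
    ∃ C : ℝ, ∀ x : ℝ, |bayesDenoiser prior q x| ≤ C * (1 + |x|) := by
  -- A set `[-A, A]` with positive prior mass
  obtain ⟨A, hA⟩ : ∃ n : ℕ, prior (Set.Icc (-(n : ℝ)) n) ≠ 0 := by
    by_contra h
    push_neg at h
    have hnull : prior (⋃ n : ℕ, Set.Icc (-(n : ℝ)) (n : ℝ)) = 0 := measure_iUnion_null h
    have huniv : (⋃ n : ℕ, Set.Icc (-(n : ℝ)) (n : ℝ)) = Set.univ := by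
      ext y
      simp only [Set.mem_iUnion, Set.mem_Icc, Set.mem_univ, iff_true]
      obtain ⟨n, hn⟩ := exists_nat_ge |y|
      exact ⟨n, (abs_le.1 hn).1, (abs_le.1 hn).2⟩
    rw [huniv, measure_univ] at hnull
    exact one_ne_zero hnull
  set p : ℝ := (prior (Set.Icc (-(A : ℝ)) A)).toReal with hp_def
  have hp : 0 < p := ENNReal.toReal_pos hA (measure_ne_top _ _)
  set M₁ : ℝ := ∫ θ, |θ| ∂prior with hM_def
  -- integrability of |θ|
  have habs : Integrable (fun θ : ℝ => |θ|) prior := by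
    refine ((integrable_const (1 : ℝ)).add hmom).mono'
      continuous_abs.aestronglyMeasurable ?_
    filter_upwards with θ
    have : |θ| ^ 2 = θ ^ 2 := sq_abs θ
    simp only [Pi.add_apply]
    rw [Real.norm_eq_abs, abs_abs]
    nlinarith [sq_nonneg (|θ| - 1), abs_nonneg θ]
  have hM₁ : 0 ≤ M₁ := integral_nonneg fun θ => abs_nonneg θ
  refine ⟨2 / q + A + M₁ / p, fun x => ?_⟩
  -- notations
  set w : ℝ → ℝ := fun θ => Real.exp (-(x - q * θ) ^ 2 / (2 * q)) with hw_def
  have hw_pos : ∀ θ, 0 < w θ := fun θ => Real.exp_pos _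
  have hw_le_one : ∀ θ, w θ ≤ 1 := by
    intro θ
    rw [hw_def]
    apply Real.exp_le_one_iff.2
    apply div_nonpos_of_nonpos_of_nonneg
    · simpa using sq_nonneg (x - q * θ)
    · positivity
  have hw_cont : Continuous w := by
    apply Real.continuous_exp.comp
    continuity
  -- integrability facts
  have hw_int : Integrable w prior := by
    refine (integrable_const (1 : ℝ)).mono' hw_cont.aestronglyMeasurable ?_
    filter_upwards with θ
    rw [Real.norm_eq_abs, abs_of_pos (hw_pos θ)]
    exact hw_le_one θ
  have hθw : Integrable (fun θ => θ * w θ) prior := by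
    refine habs.mono' (continuous_id.mul hw_cont).aestronglyMeasurable ?_
    filter_upwards with θ
    rw [Real.norm_eq_abs, abs_mul, abs_of_pos (hw_pos θ)]
    calc |θ| * w θ ≤ |θ| * 1 := by
          exact mul_le_mul_of_nonneg_left (hw_le_one θ) (abs_nonneg θ)
      _ = |θ| := mul_one _
  have haw : Integrable (fun θ => |θ| * w θ) prior := by
    have := hθw.abs
    refine this.congr ?_
    filter_upwards with θ
    rw [abs_mul, abs_of_pos (hw_pos θ)]
  -- key constants
  set E : ℝ := Real.exp (-(|x| + q * A) ^ 2 / (2 * q)) with hE_def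
  have hE_pos : 0 < E := Real.exp_pos _
  set R : ℝ := 2 * |x| / q + A with hR_def
  have hR_nonneg : 0 ≤ R := by
    rw [hR_def]; positivity
  set D : ℝ := ∫ θ, w θ ∂prior with hD_def
  -- lower bound on the denominator
  have hDlow : p * E ≤ D := by
    have h1 : ∫ θ in Set.Icc (-(A : ℝ)) A, E ∂prior = p * E := by
      rw [setIntegral_const, smul_eq_mul]; rfl
    have h2 : ∫ θ in Set.Icc (-(A : ℝ)) A, E ∂prior
        ≤ ∫ θ in Set.Icc (-(A : ℝ)) A, w θ ∂prior := by
      refine setIntegral_mono_on (integrableOn_const (measure_ne_top _ _))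
        hw_int.integrableOn measurableSet_Icc ?_
      intro θ hθ
      rw [hE_def, hw_def]
      apply Real.exp_le_exp.2
      rw [neg_div, neg_div, neg_le_neg_iff]
      apply div_le_div_of_nonneg_right ?_ (by positivity)
      have hθA : |θ| ≤ A := abs_le.2 ⟨hθ.1, hθ.2⟩
      have h3 : |x - q * θ| ≤ |x| + q * A := by
        calc |x - q * θ| ≤ |x| + |q * θ| := abs_sub _ _
          _ = |x| + q * |θ| := by rw [abs_mul, abs_of_pos hq]
          _ ≤ |x| + q * A := by nlinarith
      calc (x - q * θ) ^ 2 = |x - q * θ| ^ 2 := (sq_abs _).symm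
        _ ≤ (|x| + q * A) ^ 2 := by
            apply pow_le_pow_left₀ (abs_nonneg _) h3
    have h3 : ∫ θ in Set.Icc (-(A : ℝ)) A, w θ ∂prior ≤ D := by
      rw [hD_def]
      exact setIntegral_le_integral hw_int
        (Filter.Eventually.of_forall fun θ => (hw_pos θ).le)
    linarith
  have hD_pos : 0 < D := lt_of_lt_of_le (by positivity) hDlow
  -- upper bound on the numerator
  have hNum : |∫ θ, θ * w θ ∂prior| ≤ R * D + E * M₁ := by
    have h0 : |∫ θ, θ * w θ ∂prior| ≤ ∫ θ, |θ| * w θ ∂prior := by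
      calc |∫ θ, θ * w θ ∂prior| ≤ ∫ θ, |θ * w θ| ∂prior := by
            simpa only [Real.norm_eq_abs] using
              norm_integral_le_integral_norm (μ := prior) (fun θ => θ * w θ)
        _ = ∫ θ, |θ| * w θ ∂prior := by
            apply integral_congr_ae
            filter_upwards with θ
            rw [abs_mul, abs_of_pos (hw_pos θ)]
    have hsplit : ∫ θ, |θ| * w θ ∂prior
        = (∫ θ in Set.Icc (-R) R, |θ| * w θ ∂prior)
          + ∫ θ in (Set.Icc (-R) R)ᶜ, |θ| * w θ ∂prior := by
      rw [integral_add_compl measurableSet_Icc haw]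
    have hin : ∫ θ in Set.Icc (-R) R, |θ| * w θ ∂prior ≤ R * D := by
      have h1 : ∫ θ in Set.Icc (-R) R, |θ| * w θ ∂prior
          ≤ ∫ θ in Set.Icc (-R) R, R * w θ ∂prior := by
        refine setIntegral_mono_on haw.integrableOn
          (hw_int.const_mul R).integrableOn measurableSet_Icc ?_
        intro θ hθ
        exact mul_le_mul_of_nonneg_right (abs_le.2 ⟨hθ.1, hθ.2⟩) (hw_pos θ).le
      have h2 : ∫ θ in Set.Icc (-R) R, R * w θ ∂prior
          = R * ∫ θ in Set.Icc (-R) R, w θ ∂prior := by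
        rw [integral_const_mul]
      have h3 : ∫ θ in Set.Icc (-R) R, w θ ∂prior ≤ D :=
        setIntegral_le_integral hw_int
          (Filter.Eventually.of_forall fun θ => (hw_pos θ).le)
      calc ∫ θ in Set.Icc (-R) R, |θ| * w θ ∂prior
          ≤ R * ∫ θ in Set.Icc (-R) R, w θ ∂prior := by rw [← h2]; exact h1
        _ ≤ R * D := mul_le_mul_of_nonneg_left h3 hR_nonneg
    have hout : ∫ θ in (Set.Icc (-R) R)ᶜ, |θ| * w θ ∂prior ≤ E * M₁ := by
      have h1 : ∫ θ in (Set.Icc (-R) R)ᶜ, |θ| * w θ ∂prior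
          ≤ ∫ θ in (Set.Icc (-R) R)ᶜ, |θ| * E ∂prior := by
        refine setIntegral_mono_on haw.integrableOn
          (habs.mul_const E).integrableOn measurableSet_Icc.compl ?_
        intro θ hθ
        have hθR : R < |θ| := by
          rw [Set.mem_compl_iff, Set.mem_Icc] at hθ
          rcases lt_or_ge R |θ| with h | h
          · exact h
          · exact absurd ⟨(abs_le.1 h).1, (abs_le.1 h).2⟩ hθ
        have hwE : w θ ≤ E := by
          rw [hw_def, hE_def]
          apply Real.exp_le_exp.2
          rw [neg_div, neg_div, neg_le_neg_iff]
          apply div_le_div_of_nonneg_right ?_ (by positivity)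
          have h4 : |x| + q * A ≤ |x - q * θ| := by
            have h5 : |q * θ| - |x| ≤ |q * θ - x| := abs_sub_abs_le_abs_sub _ _
            rw [abs_sub_comm] at h5
            rw [abs_mul, abs_of_pos hq] at h5
            have h6 : q * R = 2 * |x| + q * A := by
              rw [hR_def]; field_simp
            nlinarith
          calc (|x| + q * A) ^ 2 ≤ |x - q * θ| ^ 2 := by
                apply pow_le_pow_left₀ (by positivity) h4
            _ = (x - q * θ) ^ 2 := sq_abs _
        exact mul_le_mul_of_nonneg_left hwE (abs_nonneg θ)
      have h2 : ∫ θ in (Set.Icc (-R) R)ᶜ, |θ| * E ∂prior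
          = E * ∫ θ in (Set.Icc (-R) R)ᶜ, |θ| ∂prior := by
        rw [integral_mul_const]; ring
      have h3 : ∫ θ in (Set.Icc (-R) R)ᶜ, |θ| ∂prior ≤ M₁ :=
        setIntegral_le_integral habs
          (Filter.Eventually.of_forall fun θ => abs_nonneg θ)
      calc ∫ θ in (Set.Icc (-R) R)ᶜ, |θ| * w θ ∂prior
          ≤ E * ∫ θ in (Set.Icc (-R) R)ᶜ, |θ| ∂prior := by rw [← h2]; exact h1
        _ ≤ E * M₁ := mul_le_mul_of_nonneg_left h3 hE_pos.le
    calc |∫ θ, θ * w θ ∂prior| ≤ ∫ θ, |θ| * w θ ∂prior := h0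
      _ = _ := hsplit
      _ ≤ R * D + E * M₁ := add_le_add hin hout
  -- conclude
  have hEM : E * M₁ ≤ M₁ / p * D := by
    have h1 : M₁ / p * (p * E) ≤ M₁ / p * D :=
      mul_le_mul_of_nonneg_left hDlow (by positivity)
    have h2 : M₁ / p * (p * E) = E * M₁ := by
      field_simp
    linarith
  have hfinal : R + M₁ / p ≤ (2 / q + A + M₁ / p) * (1 + |x|) := by
    have hx : 0 ≤ |x| := abs_nonneg x
    have hMp : 0 ≤ M₁ / p := by positivity
    have hRval : R = 2 * |x| / q + A := hR_def
    have h2q : (2 / q) * |x| = 2 * |x| / q := by ring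
    have hdiff : (2 / q + A + M₁ / p) * (1 + |x|) - (R + M₁ / p)
        = 2 / q + (A : ℝ) * |x| + (M₁ / p) * |x| := by
      rw [hRval]; field_simp; ring
    nlinarith [mul_nonneg (by positivity : (0:ℝ) ≤ (A:ℝ)) hx, mul_nonneg hMp hx,
      div_pos (by norm_num : (0:ℝ) < 2) hq]
  rw [bayesDenoiser, abs_div, abs_of_pos hD_pos]
  rw [div_le_iff₀ hD_pos]
  calc |∫ θ, θ * w θ ∂prior| ≤ R * D + E * M₁ := hNum
    _ ≤ R * D + M₁ / p * D := by linarith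
    _ = (R + M₁ / p) * D := by ring
    _ ≤ (2 / q + A + M₁ / p) * (1 + |x|) * D :=
        mul_le_mul_of_nonneg_right hfinal hD_pos.le
end

section
/- Let (f_n)_{n≥1} with f_n : [t₁, t₂] → ℝ be a sequence of differentiable functions converging pointwise to f_∞. Assume f_n = g_n + h_n where g_n and h_n are differentiable, g_n is convex, and the family {h_n'} is equicontinuous on [t₁, t₂], i.e., there exists a non-decreasing function δ(ε) with δ(ε) ↓ 0 as ε ↓ 0 such that |t − t'| ≤ ε implies |h_n'(t) − h_n'(t')| ≤ δ(ε) for all n. If f_∞ is differentiable at an interior point t₀ ∈ (t₁, t₂), then lim_{n→∞} f_n'(t₀) = f_∞'(t₀). -/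
open Set Filter

/-- Let `f n : [t₁, t₂] → ℝ` be differentiable functions converging pointwise to `f∞`.
Assume `f n = g n + h n` on `[t₁, t₂]` where `g n, h n` are differentiable, `g n` is convex,
and `{(h n)'}` is equicontinuous on `[t₁, t₂]` (witnessed by a non-decreasing modulus `δ`
tending to `0` from the right at `0`).  If `f∞` is differentiable at an interior point
`t₀ ∈ (t₁, t₂)`, then `(f n)' t₀ → f∞' t₀`. -/
theorem deriv_tendsto_of_convex_add_equicontinuous
    (t₁ t₂ t₀ : ℝ) (ht : t₁ < t₂) (ht₀ : t₀ ∈ Ioo t₁ t₂)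
    (f g h : ℕ → ℝ → ℝ) (flim : ℝ → ℝ)
    (hfdiff : ∀ n, ∀ t ∈ Icc t₁ t₂, DifferentiableAt ℝ (f n) t)
    (hgdiff : ∀ n, ∀ t ∈ Icc t₁ t₂, DifferentiableAt ℝ (g n) t)
    (hhdiff : ∀ n, ∀ t ∈ Icc t₁ t₂, DifferentiableAt ℝ (h n) t)
    (hsum : ∀ n, ∀ t ∈ Icc t₁ t₂, f n t = g n t + h n t)
    (hconv : ∀ n, ConvexOn ℝ (Icc t₁ t₂) (g n))
    (δ : ℝ → ℝ)
    (hδmono : ∀ ε ε' : ℝ, 0 < ε → ε ≤ ε' → δ ε ≤ δ ε')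
    (hδ0 : Tendsto δ (nhdsWithin 0 (Ioi 0)) (nhds 0))
    (hequi : ∀ n, ∀ ε > (0 : ℝ), ∀ t ∈ Icc t₁ t₂, ∀ t' ∈ Icc t₁ t₂,
      |t - t'| ≤ ε → |deriv (h n) t - deriv (h n) t'| ≤ δ ε)
    (hpt : ∀ t ∈ Icc t₁ t₂, Tendsto (fun n => f n t) atTop (nhds (flim t)))
    (hflim : DifferentiableAt ℝ flim t₀) :
    Tendsto (fun n => deriv (f n) t₀) atTop (nhds (deriv flim t₀)) := by
  set L := deriv flim t₀ with hL
  have ht₀m : t₀ ∈ Icc t₁ t₂ := Ioo_subset_Icc_self ht₀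
  rw [Metric.tendsto_atTop]
  intro η hη
  have hη3 : 0 < η / 3 := by positivity
  -- choose ε
  have hslope : Tendsto (slope flim t₀) (nhdsWithin t₀ {t₀}ᶜ) (nhds L) :=
    hasDerivAt_iff_tendsto_slope.mp hflim.hasDerivAt
  have hplus : Tendsto (fun ε : ℝ => t₀ + ε) (nhdsWithin 0 (Ioi 0)) (nhdsWithin t₀ {t₀}ᶜ) := by
    apply tendsto_nhdsWithin_of_tendsto_nhds_of_eventually_within
    · have : Tendsto (fun ε : ℝ => t₀ + ε) (nhds 0) (nhds t₀) := by
        simpa using (continuous_add_left t₀).tendsto (0:ℝ)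
      exact this.mono_left nhdsWithin_le_nhds
    · filter_upwards [self_mem_nhdsWithin] with ε (hε : (0:ℝ) < ε)
      simp only [mem_compl_iff, mem_singleton_iff]
      intro hc; linarith
  have hminus : Tendsto (fun ε : ℝ => t₀ - ε) (nhdsWithin 0 (Ioi 0)) (nhdsWithin t₀ {t₀}ᶜ) := by
    apply tendsto_nhdsWithin_of_tendsto_nhds_of_eventually_within
    · have : Tendsto (fun ε : ℝ => t₀ - ε) (nhds 0) (nhds t₀) := by
        simpa using (continuous_sub_left t₀).tendsto (0:ℝ)
      exact this.mono_left nhdsWithin_le_nhds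
    · filter_upwards [self_mem_nhdsWithin] with ε (hε : (0:ℝ) < ε)
      simp only [mem_compl_iff, mem_singleton_iff]
      intro hc; linarith
  have E1 : ∀ᶠ ε in nhdsWithin (0:ℝ) (Ioi 0), |δ ε - 0| < η / 3 :=
    hδ0.eventually (eventually_abs_sub_lt 0 hη3)
  have E2 : ∀ᶠ ε in nhdsWithin (0:ℝ) (Ioi 0), |slope flim t₀ (t₀ + ε) - L| < η / 3 :=
    (hslope.comp hplus).eventually (eventually_abs_sub_lt L hη3)
  have E3 : ∀ᶠ ε in nhdsWithin (0:ℝ) (Ioi 0), |slope flim t₀ (t₀ - ε) - L| < η / 3 :=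
    (hslope.comp hminus).eventually (eventually_abs_sub_lt L hη3)
  have E4 : ∀ᶠ ε in nhdsWithin (0:ℝ) (Ioi 0), ε < t₀ - t₁ ∧ ε < t₂ - t₀ := by
    apply eventually_nhdsWithin_of_eventually_nhds
    have h1 : (0:ℝ) < t₀ - t₁ := by linarith [ht₀.1]
    have h2 : (0:ℝ) < t₂ - t₀ := by linarith [ht₀.2]
    filter_upwards [eventually_lt_nhds h1, eventually_lt_nhds h2] with x using And.intro
  obtain ⟨ε, hδε, h2, h3, ⟨h41, h42⟩, hε⟩ :=
    (E1.and (E2.and (E3.and (E4.and self_mem_nhdsWithin)))).exists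
  replace hε : (0:ℝ) < ε := hε
  rw [abs_sub_comm, abs_sub_lt_iff] at hδε h2 h3
  have hmemp : t₀ + ε ∈ Icc t₁ t₂ := ⟨by linarith [ht₀.1], by linarith⟩
  have hmemm : t₀ - ε ∈ Icc t₁ t₂ := ⟨by linarith, by linarith [ht₀.2]⟩
  have hnhds : Icc t₁ t₂ ∈ nhds t₀ := Icc_mem_nhds ht₀.1 ht₀.2
  -- slope decomposition
  have hsl : ∀ n, ∀ x ∈ Icc t₁ t₂, ∀ y ∈ Icc t₁ t₂,
      slope (f n) x y = slope (g n) x y + slope (h n) x y := by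
    intro n x hx y hy
    simp only [slope_def_field]
    rw [hsum n x hx, hsum n y hy]
    ring
  have hderiv_split : ∀ n, deriv (f n) t₀ = deriv (g n) t₀ + deriv (h n) t₀ := by
    intro n
    have heq : f n =ᶠ[nhds t₀] (fun t => g n t + h n t) := by
      filter_upwards [hnhds] with t ht using hsum n t ht
    rw [heq.deriv_eq, deriv_fun_add (hgdiff n t₀ ht₀m) (hhdiff n t₀ ht₀m)]
  -- key upper bound
  have key_up : ∀ n, deriv (f n) t₀ ≤ slope (f n) t₀ (t₀ + ε) + δ ε := by
    intro n
    have hsub : Icc t₀ (t₀ + ε) ⊆ Icc t₁ t₂ := Icc_subset_Icc ht₀.1.le (by linarith)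
    have hcont : ContinuousOn (h n) (Icc t₀ (t₀ + ε)) := fun x hx =>
      (hhdiff n x (hsub hx)).continuousAt.continuousWithinAt
    obtain ⟨c, hc, hc'⟩ := exists_hasDerivAt_eq_slope (h n) (deriv (h n))
      (by linarith : t₀ < t₀ + ε) hcont
      (fun x hx => (hhdiff n x (hsub (Ioo_subset_Icc_self hx))).hasDerivAt)
    have hcm : c ∈ Icc t₁ t₂ := hsub (Ioo_subset_Icc_self hc)
    have hceq : deriv (h n) c = slope (h n) t₀ (t₀ + ε) := by
      rw [hc', slope_def_field]
    have hequi' : |deriv (h n) t₀ - deriv (h n) c| ≤ δ ε := by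
      refine hequi n ε hε t₀ ht₀m c hcm ?_
      rw [abs_le]; constructor <;> [skip; skip] <;> cases hc with
      | intro h1 h2 => linarith
    rw [abs_sub_le_iff] at hequi'
    have hg_le : deriv (g n) t₀ ≤ slope (g n) t₀ (t₀ + ε) :=
      (hconv n).deriv_le_slope ht₀m hmemp (by linarith) (hgdiff n t₀ ht₀m)
    rw [hderiv_split n, hsl n t₀ ht₀m (t₀ + ε) hmemp]
    linarith [hequi'.1, hceq ▸ hequi'.1]
  -- key lower bound
  have key_lo : ∀ n, slope (f n) (t₀ - ε) t₀ - δ ε ≤ deriv (f n) t₀ := by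
    intro n
    have hsub : Icc (t₀ - ε) t₀ ⊆ Icc t₁ t₂ := Icc_subset_Icc (by linarith) ht₀.2.le
    have hcont : ContinuousOn (h n) (Icc (t₀ - ε) t₀) := fun x hx =>
      (hhdiff n x (hsub hx)).continuousAt.continuousWithinAt
    obtain ⟨c, hc, hc'⟩ := exists_hasDerivAt_eq_slope (h n) (deriv (h n))
      (by linarith : t₀ - ε < t₀) hcont
      (fun x hx => (hhdiff n x (hsub (Ioo_subset_Icc_self hx))).hasDerivAt)
    have hcm : c ∈ Icc t₁ t₂ := hsub (Ioo_subset_Icc_self hc)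
    have hceq : deriv (h n) c = slope (h n) (t₀ - ε) t₀ := by
      rw [hc', slope_def_field]
    have hequi' : |deriv (h n) t₀ - deriv (h n) c| ≤ δ ε := by
      refine hequi n ε hε t₀ ht₀m c hcm ?_
      rw [abs_le]; constructor <;> cases hc with
      | intro h1 h2 => linarith
    rw [abs_sub_le_iff] at hequi'
    have hg_le : slope (g n) (t₀ - ε) t₀ ≤ deriv (g n) t₀ :=
      (hconv n).slope_le_deriv hmemm ht₀m (by linarith) (hgdiff n t₀ ht₀m)
    rw [hderiv_split n, hsl n (t₀ - ε) hmemm t₀ ht₀m]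
    linarith [hequi'.2, hceq ▸ hequi'.2]
  -- slopes of f n converge to slopes of flim
  have hup : Tendsto (fun n => slope (f n) t₀ (t₀ + ε)) atTop (nhds (slope flim t₀ (t₀ + ε))) := by
    simp only [slope_def_field]
    exact ((hpt _ hmemp).sub (hpt _ ht₀m)).div_const _
  have hlo : Tendsto (fun n => slope (f n) (t₀ - ε) t₀) atTop
      (nhds (slope flim (t₀ - ε) t₀)) := by
    simp only [slope_def_field]
    exact ((hpt _ ht₀m).sub (hpt _ hmemm)).div_const _
  have F1 := hup.eventually (eventually_abs_sub_lt (slope flim t₀ (t₀ + ε)) hη3)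
  have F2 := hlo.eventually (eventually_abs_sub_lt (slope flim (t₀ - ε) t₀) hη3)
  obtain ⟨N, hN⟩ := eventually_atTop.mp (F1.and F2)
  refine ⟨N, fun n hn => ?_⟩
  obtain ⟨hN1, hN2⟩ := hN n hn
  rw [abs_sub_lt_iff] at hN1 hN2
  have hcomm : slope flim (t₀ - ε) t₀ = slope flim t₀ (t₀ - ε) := slope_comm _ _ _
  rw [Real.dist_eq, abs_sub_lt_iff]
  constructor
  · linarith [key_up n, hN1.1, h2.2, hδε.2]
  · linarith [key_lo n, hN2.2, hcomm ▸ h3.1, hδε.2]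
end
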